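/- arXiv:1711.03920 — 6 statements merged into one kernel-verified Lean document; each statement's English description precedes it below -/
import Mathlib

section
/- For 0 < ν < 1, p ∈ (0, π/2), and the two-particle dispersion ω₊₊(p,k) = ω(p+k) + ω(p−k) with ω(x) = arccos(ν cos x), every real k with ∂ω₊₊/∂k (p,k) = 0 satisfies k ≡ 0 (mod π). -/
/-!
Write `s = sin x`. Since `1 - ν² cos² x = (1 - ν²) + ν² s²`, the derivative of
`x ↦ arccos (ν cos x)` is `ν s / √((1 - ν²) + ν² s²)`, and for `ν² < 1` the map
`s ↦ s / √(a + b s²)` with `a > 0` is injective. Stationarity of `ω₊₊` in `k` therefore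
forces `sin (p + k) = sin (p - k)`, i.e. `2 cos p sin k = 0`, and `cos p ≠ 0` gives `sin k = 0`.
-/

open Real

lemma div_sqrt_add_mul_sq_injective {a b : ℝ} (ha : 0 < a) (hb : 0 ≤ b) :
    Function.Injective fun s : ℝ => s / √(a + b * s ^ 2) := by
  intro s t hst
  have hpos : ∀ u : ℝ, 0 < a + b * u ^ 2 := fun u => by positivity
  have hA := Real.sqrt_pos.2 (hpos s)
  have hB := Real.sqrt_pos.2 (hpos t)
  have hcross : s * √(a + b * t ^ 2) = t * √(a + b * s ^ 2) :=
    (div_eq_div_iff hA.ne' hB.ne').1 hst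
  have hsq : s ^ 2 = t ^ 2 := by
    have h := congrArg (· ^ 2) hcross
    simp only [mul_pow, sq_sqrt (hpos _).le] at h
    have : a * (s ^ 2 - t ^ 2) = 0 := by linear_combination h
    linarith [(mul_eq_zero.1 this).resolve_left ha.ne']
  rw [hsq] at hcross
  exact mul_right_cancel₀ hB.ne' hcross

lemma one_sub_mul_cos_sq (ν x : ℝ) :
    1 - (ν * cos x) ^ 2 = (1 - ν ^ 2) + ν ^ 2 * sin x ^ 2 := by
  linear_combination -ν ^ 2 * sin_sq_add_cos_sq x

lemma abs_mul_cos_lt_one {ν : ℝ} (hν : |ν| < 1) (x : ℝ) : |ν * cos x| < 1 := by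
  rw [abs_mul]
  calc |ν| * |cos x| ≤ |ν| := mul_le_of_le_one_right (abs_nonneg ν) (abs_cos_le_one x)
    _ < 1 := hν

lemma hasDerivAt_arccos_mul_cos {ν : ℝ} (hν : |ν| < 1) (x : ℝ) :
    HasDerivAt (fun y => arccos (ν * cos y)) (ν * sin x / √(1 - (ν * cos x) ^ 2)) x := by
  obtain ⟨hlow, hhigh⟩ := abs_lt.1 (abs_mul_cos_lt_one hν x)
  have h := (hasDerivAt_arccos hlow.ne' hhigh.ne).comp x ((hasDerivAt_cos x).const_mul ν)
  refine h.congr_deriv ?_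
  ring

lemma hasDerivAt_arccos_mul_cos_add_add_arccos_mul_cos_sub {ν : ℝ} (hν : |ν| < 1) (p k : ℝ) :
    HasDerivAt (fun k => arccos (ν * cos (p + k)) + arccos (ν * cos (p - k)))
      (ν * sin (p + k) / √(1 - (ν * cos (p + k)) ^ 2)
        - ν * sin (p - k) / √(1 - (ν * cos (p - k)) ^ 2)) k := by
  have hplus := (hasDerivAt_arccos_mul_cos hν (p + k)).comp k ((hasDerivAt_id k).const_add p)
  have hminus := (hasDerivAt_arccos_mul_cos hν (p - k)).comp k ((hasDerivAt_id k).const_sub p)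
  exact (hplus.add hminus).congr_deriv (by simp only [mul_one, mul_neg, sub_eq_add_neg])

lemma sin_eq_sin_of_sin_div_sqrt_eq {ν x y : ℝ} (hν : |ν| < 1)
    (h : sin x / √(1 - (ν * cos x) ^ 2) = sin y / √(1 - (ν * cos y) ^ 2)) :
    sin x = sin y := by
  have ha : 0 < 1 - ν ^ 2 := by nlinarith [sq_abs ν, abs_nonneg ν]
  rw [one_sub_mul_cos_sq, one_sub_mul_cos_sq] at h
  exact div_sqrt_add_mul_sq_injective ha (sq_nonneg ν) h

theorem stationary_points (ν : ℝ) (hν0 : 0 < ν) (hν1 : ν < 1) (p : ℝ)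
    (hp0 : 0 < p) (hp1 : p < Real.pi / 2) (k : ℝ)
    (hstat : deriv (fun k : ℝ =>
      Real.arccos (ν * Real.cos (p + k)) + Real.arccos (ν * Real.cos (p - k))) k = 0) :
    ∃ n : ℤ, k = n * Real.pi := by
  have hν : |ν| < 1 := abs_lt.2 ⟨by linarith, hν1⟩
  have hderiv := (hasDerivAt_arccos_mul_cos_add_add_arccos_mul_cos_sub hν p k).deriv
  rw [hstat, eq_comm, sub_eq_zero, mul_div_assoc, mul_div_assoc] at hderiv
  have hsin : sin (p + k) = sin (p - k) :=
    sin_eq_sin_of_sin_div_sqrt_eq hν (mul_left_cancel₀ hν0.ne' hderiv)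
  have hcos : cos p ≠ 0 := (cos_pos_of_mem_Ioo ⟨by linarith [pi_pos], hp1⟩).ne'
  have hsink : sin k = 0 := by
    have : 2 * cos p * sin k = 0 := by
      linear_combination hsin - sin_add p k + sin_sub p k
    simpa [hcos] using this
  obtain ⟨n, hn⟩ := sin_eq_zero_iff.1 hsink
  exact ⟨n, hn.symm⟩
end

section
/- For 0 < ν < 1 and p ∈ (−π/2, π/2) with sin p ≠ 0, the function k_I ↦ Re Arccos(ν cos(p + i k_I)) + Re Arccos(ν cos(p − i k_I)) of real k_I converges to 2|p| as k_I → +∞. -/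
open Complex Filter
open Topology

/-- Principal branch of the complex arccosine. -/
noncomputable def carccos (z : ℂ) : ℂ :=
  -Complex.I * Complex.log (z + Complex.I * (1 - z ^ 2) ^ ((1 : ℂ) / 2))

lemma hom_sqrt {r : ℝ} (hr : 0 < r) {x : ℂ} (hx : x ≠ 0) :
    ((r : ℂ) * x) ^ ((1:ℂ)/2) = (Real.sqrt r : ℂ) * x ^ ((1:ℂ)/2) := by
  have hrx : (r:ℂ) * x ≠ 0 := mul_ne_zero (by exact_mod_cast hr.ne') hx
  rw [Complex.cpow_def_of_ne_zero hrx, Complex.cpow_def_of_ne_zero hx,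
    Complex.log_ofReal_mul hr hx, add_mul, Complex.exp_add]
  congr 1
  have h : (Real.log r : ℂ) * (1/2) = ((Real.log r * (1/2) : ℝ) : ℂ) := by push_cast; ring
  rw [h, ← Complex.ofReal_exp]
  norm_cast
  rw [Real.sqrt_eq_rpow, Real.rpow_def_of_pos hr]

lemma sqrt_sq_of_pos_re {c : ℂ} (hc : 0 < c.re) : (c ^ 2) ^ ((1:ℂ)/2) = c := by
  have := Complex.sq_cpow_two_inv hc
  rw [one_div]
  simpa using this

lemma re_carccos_eq_arg (x : ℂ) :
    (carccos x).re = Complex.arg (x + Complex.I * (1 - x ^ 2) ^ ((1:ℂ)/2)) := by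
  simp [carccos, Complex.log_im]

lemma key_exp (ν q k : ℝ) : (Real.exp (-k) : ℂ) * ((ν:ℂ) * Complex.cos ((q:ℂ) + (k:ℂ) * Complex.I))
      = (ν:ℂ)/2 * (Complex.exp ((q:ℂ)*Complex.I) * (Real.exp (-(2*k)) : ℂ)
          + Complex.exp (-(q:ℂ)*Complex.I)) := by
  have h1' : Complex.exp (((-k : ℝ)) : ℂ) * Complex.exp (((q:ℂ)+(k:ℂ)*I)*I)
      = Complex.exp ((q:ℂ)*I) * Complex.exp (((-(2*k) : ℝ)) : ℂ) := by
    rw [← Complex.exp_add, ← Complex.exp_add]; congr 1; push_cast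
    linear_combination (k:ℂ) * Complex.I_sq
  have h2' : Complex.exp (((-k :ℝ)):ℂ) * Complex.exp ((-((q:ℂ)+(k:ℂ)*I))*I)
      = Complex.exp (-(q:ℂ)*I) := by
    rw [← Complex.exp_add]; congr 1; push_cast
    linear_combination -(k:ℂ) * Complex.I_sq
  push_cast at h1' h2' ⊢
  rw [Complex.cos]
  linear_combination ((ν:ℂ)/2) * h1' + ((ν:ℂ)/2) * h2'

lemma Minv_eq (ν q : ℝ) (hν0 : 0 < ν)
    (hexp : Complex.exp (-(q:ℂ)*I) = ((Real.cos q : ℝ) : ℂ) - ((Real.sin q : ℝ) : ℂ) * I) :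
    ((ν:ℂ) * Complex.exp (-(q:ℂ)*I))⁻¹
      = ((ν⁻¹ : ℝ):ℂ) * (Complex.cos (q:ℂ) + Complex.sin (q:ℂ) * I) := by
  refine inv_eq_of_mul_eq_one_right ?_
  rw [hexp, ← Complex.ofReal_cos, ← Complex.ofReal_sin]
  have hν : ((ν:ℝ):ℂ) * ((ν⁻¹:ℝ):ℂ) = 1 := by
    rw [← Complex.ofReal_mul, mul_inv_cancel₀ hν0.ne']; norm_num
  have hpyth : ((Real.cos q : ℝ):ℂ)^2 + ((Real.sin q : ℝ):ℂ)^2 = 1 := by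
    norm_cast
    exact Real.cos_sq_add_sin_sq q
  have hIsq : (I:ℂ)^2 = -1 := Complex.I_sq
  linear_combination (((Real.cos q : ℝ):ℂ)^2 - ((Real.sin q : ℝ):ℂ)^2 * Complex.I^2) * hν
    - ((Real.sin q : ℝ):ℂ)^2 * hIsq + hpyth

lemma helper (ν : ℝ) (hν0 : 0 < ν) (q : ℝ) (hq : Real.sin q ≠ 0)
    (h1 : -(Real.pi/2) < q) (h2 : q < Real.pi/2) :
    Tendsto (fun k : ℝ => (carccos ((ν:ℂ) * Complex.cos ((q:ℂ) + (k:ℂ) * Complex.I))).re)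
      atTop (nhds |q|) := by
  have hcq : 0 < Real.cos q := Real.cos_pos_of_mem_Ioo ⟨h1, h2⟩
  set z : ℝ → ℂ := fun k => (ν:ℂ) * Complex.cos ((q:ℂ) + (k:ℂ) * I) with hzdef
  set s : ℝ → ℂ := fun k => (1 - z k ^ 2) ^ ((1:ℂ)/2) with hsdef
  set A : ℂ := (ν:ℂ)/2 * Complex.exp (-(q:ℂ)*I) with hAdef
  -- limit of e^{-k} z k
  have e0 : Tendsto (fun k : ℝ => ((Real.exp (-(2*k)) : ℝ) : ℂ)) atTop (𝓝 0) := by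
    have h2k : Tendsto (fun k : ℝ => -(2*k)) atTop atBot := by
      apply tendsto_neg_atTop_atBot.comp
      exact (tendsto_id.const_mul_atTop two_pos)
    have := Real.tendsto_exp_atBot.comp h2k
    have := Complex.continuous_ofReal.continuousAt.tendsto.comp this
    exact this
  have hA : Tendsto (fun k : ℝ => (Real.exp (-k) : ℂ) * z k) atTop (𝓝 A) := by
    have : Tendsto (fun k : ℝ => (ν:ℂ)/2 * (Complex.exp ((q:ℂ)*I) * ((Real.exp (-(2*k)) : ℝ) : ℂ)
        + Complex.exp (-(q:ℂ)*I))) atTop (𝓝 ((ν:ℂ)/2 * (Complex.exp ((q:ℂ)*I) * 0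
        + Complex.exp (-(q:ℂ)*I)))) := by
      exact (((tendsto_const_nhds.mul e0).add tendsto_const_nhds).const_mul _)
    rw [mul_zero, zero_add] at this
    exact this.congr fun k => (key_exp ν q k).symm
  have hE : Tendsto (fun k : ℝ => ((Real.exp (-k) : ℝ) : ℂ)) atTop (𝓝 0) := by
    have h1k : Tendsto (fun k : ℝ => -k) atTop atBot := tendsto_neg_atTop_atBot
    have := Real.tendsto_exp_atBot.comp h1k
    have := Complex.continuous_ofReal.continuousAt.tendsto.comp this
    exact this
  -- limit of u k
  set L : ℂ := -(A^2) with hLdef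
  set u : ℝ → ℂ := fun k => ((Real.exp (-k) : ℝ) : ℂ)^2 * (1 - z k ^ 2) with hudef
  have hu : Tendsto u atTop (𝓝 L) := by
    have h := ((hE.pow 2).sub (hA.pow 2))
    rw [show (0:ℂ)^2 - A^2 = L by rw [hLdef]; ring] at h
    exact h.congr fun k => by rw [hudef]; ring
  -- explicit form of exp(-qI)
  have hexp : Complex.exp (-(q:ℂ)*I) = ((Real.cos q : ℝ) : ℂ) - ((Real.sin q : ℝ) : ℂ) * I := by
    rw [show -(q:ℂ)*I = (((-q : ℝ)) : ℂ)*I by push_cast; ring, Complex.exp_mul_I,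
      ← Complex.ofReal_cos, ← Complex.ofReal_sin, Real.cos_neg, Real.sin_neg]
    push_cast
    ring
  have hLim : L.im = ν^2 * (Real.sin q * Real.cos q) / 2 := by
    rw [hLdef, hAdef, hexp]
    simp [Complex.mul_im, Complex.mul_re, pow_two, Complex.sin_ofReal_re, Complex.cos_ofReal_re]
    ring
  have hLim_ne : L.im ≠ 0 := by
    rw [hLim]
    have := mul_ne_zero hq hcq.ne'
    positivity
  -- z k is eventually non-degenerate
  have zform : ∀ k : ℝ, z k = (ν:ℂ) * (((Real.cos q : ℝ):ℂ) * ((Real.cosh k : ℝ):ℂ)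
      - ((Real.sin q : ℝ):ℂ) * ((Real.sinh k : ℝ):ℂ) * I) := by
    intro k
    show (ν:ℂ) * Complex.cos ((q:ℂ) + (k:ℂ) * I) = _
    rw [Complex.cos_add_mul_I]
    norm_cast
  have him : ∀ k : ℝ, (z k).im = -(ν * (Real.sin q * Real.sinh k)) := by
    intro k
    rw [zform k]
    simp [Complex.mul_im, Complex.mul_re, Complex.sin_ofReal_re, Complex.sinh_ofReal_re]
  have hz2 : ∀ k : ℝ, 1 ≤ k → 1 - z k ^ 2 ≠ 0 := by
    intro k hk hcon
    have h0 : (z k - 1) * (z k + 1) = 0 := by linear_combination -hcon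
    have him' : (z k).im ≠ 0 := by
      rw [him k]
      have hs : 0 < Real.sinh k := Real.sinh_pos_iff.mpr (by linarith)
      simp only [ne_eq, neg_eq_zero]
      exact fun hcc => (mul_ne_zero hν0.ne' (mul_ne_zero hq hs.ne')) hcc
    rcases mul_eq_zero.mp h0 with h | h
    · apply him'; rw [sub_eq_zero] at h; rw [h]; simp
    · apply him'; have h' : z k = -1 := by linear_combination h
      rw [h']; simp
  -- sqrt limit
  have hL_slit : L ∈ Complex.slitPlane := Or.inr hLim_ne
  have husqrt : Tendsto (fun k : ℝ => u k ^ ((1:ℂ)/2)) atTop (𝓝 (L ^ ((1:ℂ)/2))) :=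
    (continuousAt_cpow_const hL_slit).tendsto.comp hu
  have heq : ∀ᶠ k in atTop, u k ^ ((1:ℂ)/2) = ((Real.exp (-k) : ℝ) : ℂ) * s k := by
    filter_upwards [eventually_ge_atTop (1:ℝ)] with k hk
    have hne := hz2 k hk
    have hr : (0:ℝ) < Real.exp (-k) ^ 2 := by positivity
    have hueq : u k = ((Real.exp (-k) ^ 2 : ℝ) : ℂ) * (1 - z k ^ 2) := by
      rw [hudef]; push_cast; ring
    rw [hueq, hom_sqrt hr hne, Real.sqrt_sq (Real.exp_pos _).le]
  have hs_tend : Tendsto (fun k : ℝ => ((Real.exp (-k) : ℝ) : ℂ) * s k) atTop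
      (𝓝 (L ^ ((1:ℂ)/2))) := husqrt.congr' heq
  -- M
  set M : ℂ := (ν:ℂ) * Complex.exp (-(q:ℂ)*I) with hMdef
  have hMre : 0 < M.re := by
    rw [hMdef, hexp]
    simp [Complex.mul_re, Complex.cos_ofReal_re]
    positivity
  have hq0 : q ≠ 0 := fun h => hq (by rw [h]; simp)
  rcases lt_or_gt_of_ne hq0 with hqneg | hqpos
  · -- q < 0
    set c : ℂ := -(I * A) with hcdef
    have hsq : Real.sin q < 0 := by
      apply Real.sin_neg_of_neg_of_neg_pi_lt hqneg
      have := Real.pi_pos; linarith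
    have hcre : 0 < c.re := by
      rw [hcdef, hAdef, hexp]
      simp [Complex.mul_re, Complex.mul_im, Complex.sin_ofReal_re, Complex.cos_ofReal_re]
      nlinarith [hν0, hsq]
    have hL12 : L ^ ((1:ℂ)/2) = c := by
      rw [show L = c ^ 2 by rw [hLdef, hcdef]; linear_combination (-(A^2)) * Complex.I_sq]
      exact sqrt_sq_of_pos_re hcre
    have hIc : A + I * c = M := by
      rw [hcdef, hMdef, hAdef]
      linear_combination (-((ν:ℂ)/2 * Complex.exp (-(q:ℂ)*I))) * Complex.I_sq
    have hw_tend : Tendsto (fun k : ℝ => ((Real.exp (-k):ℝ):ℂ) * (z k + I * s k)) atTop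
        (𝓝 M) := by
      have h' := hA.add (hs_tend.const_mul I)
      rw [hL12, hIc] at h'
      exact h'.congr fun k => by ring
    have harg : Tendsto (fun k : ℝ => Complex.arg (((Real.exp (-k):ℝ):ℂ) * (z k + I * s k)))
        atTop (𝓝 (Complex.arg M)) :=
      (Complex.continuousAt_arg (Or.inl hMre)).tendsto.comp hw_tend
    have harg2 : Tendsto (fun k : ℝ => Complex.arg (z k + I * s k)) atTop
        (𝓝 (Complex.arg M)) :=
      harg.congr fun k => Complex.arg_real_mul _ (Real.exp_pos _)
    have hargM : Complex.arg M = -q := by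
      rw [hMdef, show -(q:ℂ)*I = (((-q:ℝ)):ℂ)*I by push_cast; ring, Complex.exp_mul_I]
      apply Complex.arg_mul_cos_add_sin_mul_I hν0
      constructor
      · have := Real.pi_pos; linarith
      · have := Real.pi_pos; linarith
    have habs : Complex.arg M = |q| := by rw [hargM, abs_of_neg hqneg]
    rw [← habs]
    exact harg2.congr fun k => (re_carccos_eq_arg (z k)).symm
  · -- q > 0
    set c : ℂ := I * A with hcdef
    have hsq : 0 < Real.sin q := by
      apply Real.sin_pos_of_pos_of_lt_pi hqpos
      have := Real.pi_pos; linarith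
    have hcre : 0 < c.re := by
      rw [hcdef, hAdef, hexp]
      simp [Complex.mul_re, Complex.mul_im, Complex.sin_ofReal_re, Complex.cos_ofReal_re]
      nlinarith [hν0, hsq]
    have hL12 : L ^ ((1:ℂ)/2) = c := by
      rw [show L = c ^ 2 by rw [hLdef, hcdef]; linear_combination (-(A^2)) * Complex.I_sq]
      exact sqrt_sq_of_pos_re hcre
    have hIc : A - I * c = M := by
      rw [hcdef, hMdef, hAdef]
      linear_combination (-((ν:ℂ)/2 * Complex.exp (-(q:ℂ)*I))) * Complex.I_sq
    have hs2 : ∀ k : ℝ, s k ^ 2 = 1 - z k ^ 2 := by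
      intro k
      have h := Complex.cpow_nat_inv_pow (1 - z k ^ 2) (two_ne_zero)
      norm_num at h
      exact h
    have hwy : ∀ k : ℝ, (z k + I * s k) * (z k - I * s k) = 1 := by
      intro k
      linear_combination (-(s k^2)) * Complex.I_sq + hs2 k
    have hy_tend : Tendsto (fun k : ℝ => ((Real.exp (-k):ℝ):ℂ) * (z k - I * s k)) atTop
        (𝓝 M) := by
      have h' := hA.sub (hs_tend.const_mul I)
      rw [hL12, hIc] at h'
      exact h'.congr fun k => by ring
    have hM0 : M ≠ 0 := fun h => by rw [h] at hMre; simp at hMre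
    have hinv := hy_tend.inv₀ hM0
    have heq2 : ∀ k : ℝ, (((Real.exp (-k):ℝ):ℂ) * (z k - I * s k))⁻¹
        = ((Real.exp k : ℝ):ℂ) * (z k + I * s k) := by
      intro k
      have hp : ((Real.exp (-k) : ℝ):ℂ) * ((Real.exp k : ℝ):ℂ) = 1 := by
        rw [← Complex.ofReal_mul, ← Real.exp_add]; norm_num
      refine inv_eq_of_mul_eq_one_right ?_
      linear_combination ((z k - I * s k) * (z k + I * s k)) * hp + hwy k
    have hw_tend2 : Tendsto (fun k : ℝ => ((Real.exp k : ℝ):ℂ) * (z k + I * s k)) atTop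
        (𝓝 M⁻¹) := hinv.congr heq2
    have hMinv_re : 0 < (M⁻¹).re := by
      rw [Complex.inv_re]
      exact div_pos hMre (Complex.normSq_pos.mpr hM0)
    have harg : Tendsto (fun k : ℝ => Complex.arg (((Real.exp k :ℝ):ℂ) * (z k + I * s k)))
        atTop (𝓝 (Complex.arg M⁻¹)) :=
      (Complex.continuousAt_arg (Or.inl hMinv_re)).tendsto.comp hw_tend2
    have harg2 : Tendsto (fun k : ℝ => Complex.arg (z k + I * s k)) atTop
        (𝓝 (Complex.arg M⁻¹)) :=
      harg.congr fun k => Complex.arg_real_mul _ (Real.exp_pos _)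
    have hMinv_eq : M⁻¹ = ((ν⁻¹ : ℝ):ℂ) * (Complex.cos (q:ℂ) + Complex.sin (q:ℂ) * I) := by
      rw [hMdef]
      exact Minv_eq ν q hν0 hexp
    have hargMinv : Complex.arg M⁻¹ = q := by
      rw [hMinv_eq]
      apply Complex.arg_mul_cos_add_sin_mul_I (inv_pos.mpr hν0)
      constructor
      · have := Real.pi_pos; linarith
      · have := Real.pi_pos; linarith
    have habs : Complex.arg M⁻¹ = |q| := by rw [hargMinv, abs_of_pos hqpos]
    rw [← habs]
    exact harg2.congr fun k => (re_carccos_eq_arg (z k)).symm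

theorem re_arccos_limit (ν : ℝ) (hν0 : 0 < ν) (hν1 : ν < 1) (p : ℝ)
    (hp : Real.sin p ≠ 0) (hp1 : -(Real.pi / 2) < p) (hp2 : p < Real.pi / 2) :
    Tendsto (fun kI : ℝ =>
        (carccos ((ν : ℂ) * Complex.cos ((p : ℂ) + kI * Complex.I))).re +
        (carccos ((ν : ℂ) * Complex.cos ((p : ℂ) - kI * Complex.I))).re)
      atTop (nhds (2 * |p|)) := by
  have h₁ := helper ν hν0 p hp hp1 hp2
  have h₂ := helper ν hν0 (-p) (by rw [Real.sin_neg]; simpa using hp)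
    (by linarith) (by linarith)
  rw [abs_neg] at h₂
  have h₂' : Tendsto (fun kI : ℝ =>
      (carccos ((ν : ℂ) * Complex.cos ((p : ℂ) - kI * Complex.I))).re) atTop (nhds |p|) := by
    refine h₂.congr fun k => ?_
    congr 2
    rw [← Complex.cos_neg ((p:ℂ) - k*Complex.I)]
    congr 1
    push_cast
    ring
  have hsum := h₁.add h₂'
  rw [show |p| + |p| = 2 * |p| from (two_mul _).symm] at hsum
  exact hsum
end

section
/- Let 0 < ν < 1, p ∈ ℝ with cos p ≠ 0 and sin p ≠ 0, k_I ∈ ℝ, Ω = Arccos(ν cos(p − i k_I)), and A = sin Ω + ν sin(p − i k_I). If A is real (Im A = 0) then k_I = 0. -/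
open Complex

lemma sq_half (z : ℂ) : ((1 - z ^ 2) ^ ((1 : ℂ) / 2)) ^ 2 = 1 - z ^ 2 := by
  by_cases h : (1 : ℂ) - z ^ 2 = 0
  · rw [h, Complex.zero_cpow (by norm_num : (1:ℂ)/2 ≠ 0)]; simp
  · rw [sq, ← Complex.cpow_add _ _ h]; norm_num

lemma sin_carccos (z : ℂ) : Complex.sin (carccos z) = (1 - z ^ 2) ^ ((1 : ℂ) / 2) := by
  set s : ℂ := (1 - z ^ 2) ^ ((1 : ℂ) / 2) with hs
  have hs2 : s ^ 2 = 1 - z ^ 2 := sq_half z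
  have hmul : (z + Complex.I * s) * (z - Complex.I * s) = 1 := by
    have hI : Complex.I ^ 2 = -1 := Complex.I_sq
    calc (z + Complex.I * s) * (z - Complex.I * s) = z^2 - Complex.I^2 * s^2 := by ring
      _ = z^2 + s^2 := by rw [hI]; ring
      _ = 1 := by rw [hs2]; ring
  have hw0 : z + Complex.I * s ≠ 0 := left_ne_zero_of_mul_eq_one hmul
  unfold carccos
  rw [← hs]
  set L : ℂ := Complex.log (z + Complex.I * s) with hL
  rw [Complex.sin]
  have e1 : -(-Complex.I * L) * Complex.I = -L := by
    linear_combination L * Complex.I_mul_I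
  have e2 : (-Complex.I * L) * Complex.I = L := by
    linear_combination (-L) * Complex.I_mul_I
  rw [e1, e2, Complex.exp_neg, Complex.exp_log hw0,
    inv_eq_of_mul_eq_one_right hmul]
  linear_combination (-s : ℂ) * Complex.I_sq

theorem A_real_implies_kI_zero (ν : ℝ) (hν0 : 0 < ν) (hν1 : ν < 1)
    (p : ℝ) (hcosp : Real.cos p ≠ 0) (hsinp : Real.sin p ≠ 0) (kI : ℝ)
    (Ω : ℂ) (hΩ : Ω = carccos ((ν : ℂ) * Complex.cos ((p : ℂ) - kI * Complex.I)))
    (hA : (Complex.sin Ω + (ν : ℂ) * Complex.sin ((p : ℂ) - kI * Complex.I)).im = 0) :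
    kI = 0 := by
  set w : ℂ := (p : ℂ) - kI * Complex.I with hw
  set z : ℂ := (ν : ℂ) * Complex.cos w with hz
  set S : ℂ := Complex.sin w with hSdef
  set s : ℂ := (1 - z ^ 2) ^ ((1 : ℂ) / 2) with hs
  have hsinΩ : Complex.sin Ω = s := by rw [hΩ]; exact sin_carccos z
  have hs2 : s ^ 2 = 1 - z ^ 2 := sq_half z
  rw [hsinΩ] at hA
  set a : ℝ := (s + (ν : ℂ) * S).re with ha
  have hAr : s + (ν : ℂ) * S = (a : ℂ) := Complex.ext rfl (by simpa using hA)
  have hpyth : Complex.sin w ^ 2 + Complex.cos w ^ 2 = 1 := Complex.sin_sq_add_cos_sq w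
  have hAeq : ((a : ℂ)) ^ 2 = 1 - (ν : ℂ) ^ 2 + 2 * ν * S * a := by
    rw [← hAr]
    linear_combination hs2 - (ν:ℂ)^2 * hpyth - (z + (ν:ℂ) * Complex.cos w) * hz
  have ha0 : a ≠ 0 := by
    intro h0
    rw [h0] at hAeq
    have h := congrArg Complex.re hAeq
    simp [← Complex.ofReal_pow] at h
    nlinarith [h]
  have hSim : S.im = 0 := by
    have h := congrArg Complex.im hAeq
    have h2 : (0:ℝ) = 2 * ν * S.im * a := by
      simpa [← Complex.ofReal_pow, Complex.add_im, Complex.mul_im, Complex.mul_re] using h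
    have h3 : S.im * (2 * ν * a) = 0 := by linear_combination -h2
    have h4 : (2 : ℝ) * ν * a ≠ 0 := by
      intro h5
      rcases mul_eq_zero.mp h5 with h6 | h6
      · rcases mul_eq_zero.mp h6 with h7 | h7
        · norm_num at h7
        · exact hν0.ne' h7
      · exact ha0 h6
    exact (mul_eq_zero.mp h3).resolve_right h4
  have hre : w.re = p := by simp [hw]
  have him : w.im = -kI := by simp [hw]
  have h := hSim
  rw [hSdef, Complex.sin_eq, hre, him] at h
  simp only [← Complex.ofReal_sin, ← Complex.ofReal_cos, ← Complex.ofReal_cosh,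
    ← Complex.ofReal_sinh, Complex.add_im, Complex.mul_im, Complex.mul_re,
    Complex.ofReal_re, Complex.ofReal_im, Complex.I_re, Complex.I_im] at h
  have hsinh : Real.sinh (-kI) = 0 := by
    rcases mul_eq_zero.mp (by linarith [h] : Real.cos p * Real.sinh (-kI) = 0) with h' | h'
    · exact absurd h' hcosp
    · exact h'
  have := Real.sinh_eq_zero.mp hsinh
  linarith
end

section
/- Let 0 < ν < 1, p ∈ ℝ with sin p ≠ 0, k_I ∈ ℝ, Ω = Arccos(ν cos(p − i k_I)), and A = sin Ω + ν sin(p − i k_I). Then A is never purely imaginary (Re A ≠ 0). -/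
open Complex

lemma sq_half_cpow (w : ℂ) : w ^ ((1:ℂ)/2) * w ^ ((1:ℂ)/2) = w := by
  by_cases hw : w = 0
  · simp [hw, Complex.zero_cpow (by norm_num : (1:ℂ)/2 ≠ 0)]
  · rw [← Complex.cpow_add _ _ hw]
    norm_num

theorem A_not_purely_imaginary (ν : ℝ) (hν0 : 0 < ν) (hν1 : ν < 1)
    (p : ℝ) (hsinp : Real.sin p ≠ 0) (kI : ℝ)
    (Ω : ℂ) (hΩ : Ω = carccos ((ν : ℂ) * Complex.cos ((p : ℂ) - kI * Complex.I))) :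
    (Complex.sin Ω + (ν : ℂ) * Complex.sin ((p : ℂ) - kI * Complex.I)).re ≠ 0 := by
  set w : ℂ := (p : ℂ) - kI * Complex.I with hw
  set A : ℂ := Complex.sin Ω + (ν : ℂ) * Complex.sin w with hAdef
  have hs : Complex.sin Ω * Complex.sin Ω = 1 - ((ν : ℂ) * Complex.cos w) ^ 2 := by
    rw [hΩ, sin_carccos]
    exact sq_half_cpow _
  have hA2 : A ^ 2 = 1 - (ν : ℂ) ^ 2 + 2 * (ν : ℂ) * Complex.sin w * A := by
    rw [hAdef]
    linear_combination hs - ((ν:ℂ)^2) * Complex.sin_sq_add_cos_sq w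
  intro h
  -- real part of sin w
  have hwre : w.re = p := by simp [hw]
  have hwim : w.im = -kI := by simp [hw]
  have hsinwre : (Complex.sin w).re = Real.sin p * Real.cosh (-kI) := by
    rw [Complex.sin_eq, hwre, hwim, ← Complex.ofReal_sin, ← Complex.ofReal_cosh,
      ← Complex.ofReal_cos, ← Complex.ofReal_sinh]
    simp [Complex.sin_ofReal_re]
  have hsinwre0 : (Complex.sin w).re ≠ 0 := by
    rw [hsinwre]
    exact mul_ne_zero hsinp ((Real.cosh_pos _).ne')
  -- imaginary part of A^2 is zero
  have him : (A ^ 2).im = 0 := by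
    rw [sq, Complex.mul_im, h]
    ring
  rw [hA2] at him
  have him2 : (ν = 0 ∨ (Complex.sin w).re = 0) ∨ A.im = 0 := by
    simpa [Complex.add_im, Complex.sub_im, Complex.mul_im, h, ← Complex.ofReal_pow] using him
  have hAim : A.im = 0 := by
    rcases him2 with (h' | h') | h'
    · exact absurd h' hν0.ne'
    · exact absurd h' hsinwre0
    · exact h'
  have hA0 : A = 0 := Complex.ext h hAim
  rw [hA0] at hA2
  simp at hA2
  have : (ν : ℂ) ^ 2 = 1 := by linear_combination hA2
  have hν2 : ν ^ 2 = 1 := by exact_mod_cast this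
  nlinarith
end

section
/- For 0 < ν < 1, p, k ∈ ℝ, and ω(x) = arccos(ν cos x), if ω(p+k) + ω(p−k) = ω(p+k') + ω(p−k') with k, k' ∈ (−π, π] and the equality holds modulo 2π with both sides in [2ω(p), 2π−2ω(p)], and p is not an integer multiple of π/2, then k' = k or k' = −k. -/
/-!
Write `θ = ω(p + k) + ω(p - k)`. Since `cos² α + cos² β - 2 cos α cos β cos (α + β) = sin² (α + β)`,
`ν² (1 - cos 2p cos θ + cos 2k (cos 2p - cos θ)) = sin² θ`, an affine equation in `cos 2k` whose slope
vanishes only when `cos θ = cos 2p`, and then it forces `sin 2p = 0`. So `θ` determines `cos² k`.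
The sign of `cos k` is read off from the position of `θ` relative to `π`: `arccos a + arccos b < π`
iff `0 < a + b`, and here `a + b = 2ν cos p cos k`. Finally `cos` determines `k ∈ (-π, π]` up to sign.
-/

open Real Set

/-- The paper's `ω₊₊(p, k) = ω(p + k) + ω(p - k)`, where `ω(x) = arccos (ν cos x)`. -/
noncomputable def omegaPP (ν p k : ℝ) : ℝ := arccos (ν * cos (p + k)) + arccos (ν * cos (p - k))

theorem cos_sq_add_cos_sq_sub_mul_cos_add (α β : ℝ) :
    cos α ^ 2 + cos β ^ 2 - 2 * cos α * cos β * cos (α + β) = sin (α + β) ^ 2 := by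
  rw [cos_add, sin_add]
  linear_combination (-cos β ^ 2) * sin_sq_add_cos_sq α - cos α ^ 2 * sin_sq_add_cos_sq β

theorem arccos_add_arccos_lt_pi_iff {a b : ℝ} (ha : a ∈ Icc (-1) 1) (hb : b ∈ Icc (-1) 1) :
    arccos a + arccos b < π ↔ 0 < a + b := by
  have hb' : -b ∈ Icc (-1) 1 := ⟨by linarith [hb.2], by linarith [hb.1]⟩
  rw [← lt_sub_iff_add_lt, ← arccos_neg, strictAntiOn_arccos.lt_iff_gt ha hb',
    neg_lt_iff_pos_add, add_comm]

theorem pi_lt_arccos_add_arccos_iff {a b : ℝ} (ha : a ∈ Icc (-1) 1) (hb : b ∈ Icc (-1) 1) :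
    π < arccos a + arccos b ↔ a + b < 0 := by
  have hneg {x : ℝ} (hx : x ∈ Icc (-1) 1) : -x ∈ Icc (-1) 1 :=
    ⟨by linarith [hx.2], by linarith [hx.1]⟩
  have := arccos_add_arccos_lt_pi_iff (hneg ha) (hneg hb)
  rw [arccos_neg, arccos_neg] at this
  constructor <;> intro h
  · linarith [this.1 (by linarith)]
  · linarith [this.2 (by linarith)]

theorem mul_cos_mem_Icc {ν : ℝ} (hν : |ν| ≤ 1) (x : ℝ) : ν * cos x ∈ Icc (-1) 1 := by
  rw [mem_Icc, ← abs_le, abs_mul]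
  exact mul_le_one₀ hν (abs_nonneg _) (abs_cos_le_one x)

theorem cos_add_add_cos_sub (x y : ℝ) : cos (x + y) + cos (x - y) = 2 * cos x * cos y := by
  rw [cos_add, cos_sub]; ring

section omegaPP

variable {ν : ℝ}

theorem omegaPP_lt_pi_iff (hν0 : 0 < ν) (hν1 : ν ≤ 1) (p k : ℝ) :
    omegaPP ν p k < π ↔ 0 < cos p * cos k := by
  have hν : |ν| ≤ 1 := by rw [abs_of_pos hν0]; exact hν1
  rw [omegaPP, arccos_add_arccos_lt_pi_iff (mul_cos_mem_Icc hν _) (mul_cos_mem_Icc hν _),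
    ← mul_add, cos_add_add_cos_sub, mul_pos_iff_of_pos_left hν0, mul_assoc,
    mul_pos_iff_of_pos_left two_pos]

theorem pi_lt_omegaPP_iff (hν0 : 0 < ν) (hν1 : ν ≤ 1) (p k : ℝ) :
    π < omegaPP ν p k ↔ cos p * cos k < 0 := by
  have hν : |ν| ≤ 1 := by rw [abs_of_pos hν0]; exact hν1
  rw [omegaPP, pi_lt_arccos_add_arccos_iff (mul_cos_mem_Icc hν _) (mul_cos_mem_Icc hν _),
    ← mul_add, cos_add_add_cos_sub, mul_assoc]
  constructor <;> intro h <;> nlinarith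

theorem sin_sq_omegaPP_eq (hν : |ν| ≤ 1) (p k : ℝ) :
    sin (omegaPP ν p k) ^ 2 = ν ^ 2 * (1 - cos (2 * p) * cos (omegaPP ν p k)
      + cos (2 * k) * (cos (2 * p) - cos (omegaPP ν p k))) := by
  have key := cos_sq_add_cos_sq_sub_mul_cos_add (arccos (ν * cos (p + k))) (arccos (ν * cos (p - k)))
  rw [cos_arccos (mul_cos_mem_Icc hν _).1 (mul_cos_mem_Icc hν _).2,
    cos_arccos (mul_cos_mem_Icc hν _).1 (mul_cos_mem_Icc hν _).2] at key
  rw [omegaPP, ← key, cos_two_mul, cos_two_mul]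
  set T := cos (arccos (ν * cos (p + k)) + arccos (ν * cos (p - k)))
  rw [cos_add, cos_sub]
  linear_combination (2 * ν ^ 2 * (1 + T) * sin k ^ 2) * sin_sq_add_cos_sq p
    + (2 * ν ^ 2 * (1 + T) * (1 - cos p ^ 2)) * sin_sq_add_cos_sq k

theorem cos_two_mul_eq_of_omegaPP_eq (hν0 : ν ≠ 0) (hν1 : |ν| < 1) {p k k' : ℝ}
    (hp : sin (2 * p) ≠ 0) (h : omegaPP ν p k = omegaPP ν p k') :
    cos (2 * k) = cos (2 * k') := by
  have hk := sin_sq_omegaPP_eq hν1.le p k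
  have hk' := sin_sq_omegaPP_eq hν1.le p k'
  rw [← h] at hk'
  set θ := omegaPP ν p k
  have hν2 : ν ^ 2 < 1 := (sq_lt_one_iff_abs_lt_one ν).2 hν1
  have hθ : cos (2 * p) - cos θ ≠ 0 := by
    intro hθ
    have hθ' := sin_sq_add_cos_sq θ
    rw [← sub_eq_zero.1 hθ] at hk hθ'
    have hzero : (1 - ν ^ 2) * sin (2 * p) ^ 2 = 0 := by
      linear_combination hk - hθ' + (1 - ν ^ 2) * sin_sq_add_cos_sq (2 * p)
    rcases mul_eq_zero.1 hzero with h1 | h1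
    · linarith
    · exact hp (pow_eq_zero_iff two_ne_zero |>.1 h1)
  have hprod : ν ^ 2 * (cos (2 * p) - cos θ) * (cos (2 * k) - cos (2 * k')) = 0 := by
    linear_combination hk' - hk
  rcases mul_eq_zero.1 hprod with h1 | h1
  · exact absurd h1 (mul_ne_zero (pow_ne_zero 2 hν0) hθ)
  · exact sub_eq_zero.1 h1

theorem cos_eq_of_omegaPP_eq (hν0 : 0 < ν) (hν1 : ν < 1) {p k k' : ℝ}
    (hp : sin (2 * p) ≠ 0) (h : omegaPP ν p k = omegaPP ν p k') : cos k = cos k' := by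
  have hcp : cos p ≠ 0 := by
    intro hcp; apply hp; rw [sin_two_mul, hcp, mul_zero]
  have hsq : cos k ^ 2 = cos k' ^ 2 := by
    rw [cos_sq k, cos_sq k', cos_two_mul_eq_of_omegaPP_eq hν0.ne' (by rwa [abs_of_pos hν0]) hp h]
  rcases sq_eq_sq_iff_eq_or_eq_neg.1 hsq with heq | hneg
  · exact heq
  have hlt := omegaPP_lt_pi_iff hν0 hν1.le p k
  have hgt := pi_lt_omegaPP_iff hν0 hν1.le p k
  rw [h, omegaPP_lt_pi_iff hν0 hν1.le, hneg] at hlt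
  rw [h, pi_lt_omegaPP_iff hν0 hν1.le, hneg] at hgt
  have hk'0 : cos p * cos k' = 0 := by
    rcases lt_trichotomy (cos p * cos k') 0 with h1 | h1 | h1
    · linarith [hgt.1 h1]
    · exact h1
    · linarith [hlt.1 h1]
  rw [hneg, (mul_eq_zero.1 hk'0).resolve_left hcp, neg_zero]

end omegaPP

theorem eq_or_eq_neg_of_cos_eq {x y : ℝ} (hx : x ∈ Ioc (-π) π) (hy : y ∈ Ioc (-π) π)
    (h : cos x = cos y) : y = x ∨ y = -x :=
  abs_eq_abs.1 <| injOn_cos ⟨abs_nonneg y, abs_le.2 ⟨hy.1.le, hy.2⟩⟩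
    ⟨abs_nonneg x, abs_le.2 ⟨hx.1.le, hx.2⟩⟩ (by rw [cos_abs, cos_abs, h])

theorem omega_pp_injective (ν : ℝ) (hν0 : 0 < ν) (hν1 : ν < 1) (p : ℝ)
    (hp : ∀ n : ℤ, p ≠ n * (Real.pi / 2)) (k k' : ℝ)
    (hk : k ∈ Set.Ioc (-Real.pi) Real.pi) (hk' : k' ∈ Set.Ioc (-Real.pi) Real.pi)
    (heq : Real.arccos (ν * Real.cos (p + k)) + Real.arccos (ν * Real.cos (p - k))
      = Real.arccos (ν * Real.cos (p + k')) + Real.arccos (ν * Real.cos (p - k'))) :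
    k' = k ∨ k' = -k := by
  have hp2 : sin (2 * p) ≠ 0 := by
    rw [Ne, sin_eq_zero_iff]
    rintro ⟨n, hn⟩
    exact hp n (by linarith)
  exact eq_or_eq_neg_of_cos_eq hk hk' (cos_eq_of_omegaPP_eq hν0 hν1 hp2 heq)
end

section
/- Let ν ∈ (0,1) and let ω₊₊(p,k) = ω(p+k)+ω(p−k) and ω₊₋(p,k) = ω(p+k)−ω(p−k) with ω(x) = arccos(ν cos x), p ∈ ℝ not a multiple of π/2. Then for all real k, e^{−iω₊₊(p,k)} ≠ e^{±2ip} and e^{−iω₊₋(p,k)} ≠ e^{±2ip}; i.e., the points e^{±2ip} are excluded from the continuous quasi-energy spectrum values {e^{−iω₊±(p,k)} : k ∈ ℝ}. -/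
open Complex

private lemma exp_neg_I_eq_imp_cos' {x y : ℝ}
    (h : Complex.exp (-Complex.I * x) = Complex.exp (y * Complex.I)) :
    Real.cos x = Real.cos y := by
  rw [Complex.exp_eq_exp_iff_exists_int] at h
  obtain ⟨n, hn⟩ := h
  have him := congrArg Complex.im hn
  simp [Complex.add_im, Complex.mul_im] at him
  have hx : x = -y + (-n : ℤ) * (2 * Real.pi) := by push_cast; linarith
  rw [hx, Real.cos_add_int_mul_two_pi, Real.cos_neg]

theorem spectrum_excludes_exp_two_ip (ν : ℝ) (hν0 : 0 < ν) (hν1 : ν < 1)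
    (p : ℝ) (hp : ∀ n : ℤ, p ≠ n * (Real.pi / 2)) (k : ℝ) :
    (Complex.exp (-Complex.I * (Real.arccos (ν * Real.cos (p + k))
        + Real.arccos (ν * Real.cos (p - k)))) ≠ Complex.exp (2 * Complex.I * p) ∧
     Complex.exp (-Complex.I * (Real.arccos (ν * Real.cos (p + k))
        + Real.arccos (ν * Real.cos (p - k)))) ≠ Complex.exp (-(2 * Complex.I * p))) ∧
    (Complex.exp (-Complex.I * (Real.arccos (ν * Real.cos (p + k))
        - Real.arccos (ν * Real.cos (p - k)))) ≠ Complex.exp (2 * Complex.I * p) ∧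
     Complex.exp (-Complex.I * (Real.arccos (ν * Real.cos (p + k))
        - Real.arccos (ν * Real.cos (p - k)))) ≠ Complex.exp (-(2 * Complex.I * p))) := by
  -- sin p ≠ 0 and cos p ≠ 0
  have hcp : Real.cos p ≠ 0 := by
    intro h
    rw [Real.cos_eq_zero_iff] at h
    obtain ⟨m, hm⟩ := h
    exact hp (2*m+1) (by push_cast; linarith)
  have hsp : Real.sin p ≠ 0 := by
    intro h
    rw [Real.sin_eq_zero_iff] at h
    obtain ⟨m, hm⟩ := h
    exact hp (2*m) (by push_cast; linarith)
  set c₁ := Real.cos (p + k) with hc₁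
  set c₂ := Real.cos (p - k) with hc₂
  set s₁ := Real.sin (p + k) with hs₁
  set s₂ := Real.sin (p - k) with hs₂
  set A := Real.arccos (ν * c₁) with hA
  set B := Real.arccos (ν * c₂) with hB
  have hb1 : -1 ≤ ν * c₁ ∧ ν * c₁ ≤ 1 := by
    have := Real.neg_one_le_cos (p+k); have := Real.cos_le_one (p+k)
    constructor <;> nlinarith
  have hb2 : -1 ≤ ν * c₂ ∧ ν * c₂ ≤ 1 := by
    have := Real.neg_one_le_cos (p-k); have := Real.cos_le_one (p-k)
    constructor <;> nlinarith
  have hcosA : Real.cos A = ν * c₁ := Real.cos_arccos hb1.1 hb1.2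
  have hcosB : Real.cos B = ν * c₂ := Real.cos_arccos hb2.1 hb2.2
  have hsinA : Real.sin A = Real.sqrt (1 - (ν*c₁)^2) := Real.sin_arccos _
  have hsinB : Real.sin B = Real.sqrt (1 - (ν*c₂)^2) := Real.sin_arccos _
  have hX1 : (0:ℝ) ≤ 1 - (ν*c₁)^2 := by nlinarith [hb1.1, hb1.2]
  have hprod : Real.sin A * Real.sin B
      = Real.sqrt ((1 - (ν*c₁)^2) * (1 - (ν*c₂)^2)) := by
    rw [hsinA, hsinB, Real.sqrt_mul hX1]
  -- pythagorean identities
  have hp1 : s₁^2 + c₁^2 = 1 := Real.sin_sq_add_cos_sq _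
  have hp2 : s₂^2 + c₂^2 = 1 := Real.sin_sq_add_cos_sq _
  -- sin 2p
  have hs2p : Real.sin (2*p) = s₁ * c₂ + c₁ * s₂ := by
    rw [show (2:ℝ)*p = (p+k)+(p-k) by ring, Real.sin_add]
  have hs2pne : Real.sin (2*p) ≠ 0 := by
    rw [Real.sin_two_mul]
    exact mul_ne_zero (mul_ne_zero two_ne_zero hsp) hcp
  -- key identity
  have hident : (1 - (ν*c₁)^2) * (1 - (ν*c₂)^2)
      = (s₁*s₂ - (1-ν^2)*(c₁*c₂))^2 + (1-ν^2) * (Real.sin (2*p))^2 := by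
    rw [hs2p]
    linear_combination (-(s₂^2) - (1-ν^2)*c₂^2) * hp1 + (-(1 - ν^2*c₁^2)) * hp2
  set R := s₁*s₂ - (1-ν^2)*(c₁*c₂) with hR
  have hkey : |R| < Real.sin A * Real.sin B := by
    rw [hprod, hident]
    calc |R| = Real.sqrt (R^2) := (Real.sqrt_sq_eq_abs R).symm
      _ < _ := by
        apply Real.sqrt_lt_sqrt (sq_nonneg R)
        have : 0 < (1-ν^2) * (Real.sin (2*p))^2 := by
          apply mul_pos (by nlinarith) (by positivity)
        linarith
  -- cos 2p
  have hc2p : Real.cos (2*p) = c₁ * c₂ - s₁ * s₂ := by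
    rw [show (2:ℝ)*p = (p+k)+(p-k) by ring, Real.cos_add]
  have habs := abs_lt.mp hkey
  have hlt1 : Real.cos (A + B) < Real.cos (2*p) := by
    rw [Real.cos_add, hcosA, hcosB, hc2p]
    linarith [habs.1, habs.2]
  have hlt2 : Real.cos (2*p) < Real.cos (A - B) := by
    rw [Real.cos_sub, hcosA, hcosB, hc2p]
    linarith [habs.1, habs.2]
  -- now exclude the exponentials
  have conv1 : (-Complex.I * ((A:ℂ) + (B:ℂ))) = -Complex.I * ((A+B : ℝ) : ℂ) := by
    push_cast; ring
  have conv2 : (-Complex.I * ((A:ℂ) - (B:ℂ))) = -Complex.I * ((A-B : ℝ) : ℂ) := by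
    push_cast; ring
  have conv3 : (2 * Complex.I * (p:ℂ)) = ((2*p : ℝ) : ℂ) * Complex.I := by
    push_cast; ring
  have conv4 : (-(2 * Complex.I * (p:ℂ))) = ((-(2*p) : ℝ) : ℂ) * Complex.I := by
    push_cast; ring
  refine ⟨⟨?_, ?_⟩, ?_, ?_⟩ <;> intro h
  · rw [conv1, conv3] at h
    exact absurd (exp_neg_I_eq_imp_cos' h) (ne_of_lt hlt1)
  · rw [conv1, conv4] at h
    have := exp_neg_I_eq_imp_cos' h
    rw [Real.cos_neg] at this
    exact absurd this (ne_of_lt hlt1)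
  · rw [conv2, conv3] at h
    exact absurd (exp_neg_I_eq_imp_cos' h) (ne_of_gt hlt2)
  · rw [conv2, conv4] at h
    have := exp_neg_I_eq_imp_cos' h
    rw [Real.cos_neg] at this
    exact absurd this (ne_of_gt hlt2)
end
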